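/- Let m ≥ 2, 0 ≤ s ≤ m, let I ⊆ ℝ be an open interval, and let z : I → ℝ^{m+1} be a smooth curve satisfying, with the bilinear form of index s+1 on ℝ^{m+1}: ⟨z(x), z(x)⟩_{s+1} = 0, ⟨z'(x), z'(x)⟩_{s+1} = −2, and ⟨z''(x), z''(x)⟩_{s+1} = 4 for all x ∈ I. Define L(x,y) = z(x)·tanh((x+y)/√2) − z'(x)/√2 for (x,y) ∈ I × ℝ. Then on I × ℝ: ⟨L, L⟩_{s+1} = −1, ⟨∂L/∂x, ∂L/∂x⟩_{s+1} = 0, ⟨∂L/∂y, ∂L/∂y⟩_{s+1} = 0, ⟨∂L/∂x, ∂L/∂y⟩_{s+1} = −sech²((x+y)/√2), and ∂²L/∂x∂y = −sech²((x+y)/√2)·L. (This is the converse part of case (ii) of Theorem 6.1: such an L defines a minimal Lorentz surface of constant curvature −1 in the pseudo-hyperbolic space H^m_s(−1).) -/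

import Mathlib

noncomputable def pform (s n : ℕ) (u v : Fin n → ℝ) : ℝ :=
  ∑ i : Fin n, (if (i : ℕ) < s then -(u i * v i) else u i * v i)

noncomputable def pd1 {E : Type*} [NormedAddCommGroup E] [NormedSpace ℝ E]
    (L : ℝ → ℝ → E) (x y : ℝ) : E :=
  deriv (fun t => L t y) x

noncomputable def pd2 {E : Type*} [NormedAddCommGroup E] [NormedSpace ℝ E]
    (L : ℝ → ℝ → E) (x y : ℝ) : E :=
  deriv (fun t => L x t) y

noncomputable def sech (t : ℝ) : ℝ := 1 / Real.cosh t

lemma pform_comm (s n : ℕ) (u v : Fin n → ℝ) : pform s n u v = pform s n v u := by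
  unfold pform
  refine Finset.sum_congr rfl fun i _ => ?_
  by_cases h : (i : ℕ) < s <;> simp [h] <;> ring

lemma pform_add_left (s n : ℕ) (u u' v : Fin n → ℝ) :
    pform s n (u + u') v = pform s n u v + pform s n u' v := by
  unfold pform
  rw [← Finset.sum_add_distrib]
  refine Finset.sum_congr rfl fun i _ => ?_
  by_cases h : (i : ℕ) < s <;> simp [h] <;> ring

lemma pform_add_right (s n : ℕ) (u v v' : Fin n → ℝ) :
    pform s n u (v + v') = pform s n u v + pform s n u v' := by
  rw [pform_comm, pform_add_left, pform_comm s n v u, pform_comm s n v' u]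

lemma pform_smul_left (s n : ℕ) (a : ℝ) (u v : Fin n → ℝ) :
    pform s n (a • u) v = a * pform s n u v := by
  unfold pform
  rw [Finset.mul_sum]
  refine Finset.sum_congr rfl fun i _ => ?_
  by_cases h : (i : ℕ) < s <;> simp [h] <;> ring

lemma pform_smul_right (s n : ℕ) (a : ℝ) (u v : Fin n → ℝ) :
    pform s n u (a • v) = a * pform s n u v := by
  rw [pform_comm, pform_smul_left, pform_comm]

lemma pform_sub_left (s n : ℕ) (u u' v : Fin n → ℝ) :
    pform s n (u - u') v = pform s n u v - pform s n u' v := by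
  have : u - u' = u + (-1 : ℝ) • u' := by ext i; simp; ring
  rw [this, pform_add_left, pform_smul_left]; ring

lemma pform_sub_right (s n : ℕ) (u v v' : Fin n → ℝ) :
    pform s n u (v - v') = pform s n u v - pform s n u v' := by
  rw [pform_comm, pform_sub_left, pform_comm s n v u, pform_comm s n v' u]

lemma pform_hasDerivAt {n s : ℕ} {u v : ℝ → Fin n → ℝ} {u' v' : Fin n → ℝ} {x : ℝ}
    (hu : HasDerivAt u u' x) (hv : HasDerivAt v v' x) :
    HasDerivAt (fun t => pform s n (u t) (v t))
      (pform s n u' (v x) + pform s n (u x) v') x := by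
  have key : HasDerivAt
      (fun t => ∑ i : Fin n, (if (i : ℕ) < s then -(u t i * v t i) else u t i * v t i))
      (∑ i : Fin n, (if (i : ℕ) < s then -(u' i * v x i + u x i * v' i)
        else u' i * v x i + u x i * v' i)) x := by
    refine HasDerivAt.fun_sum fun i _ => ?_
    have hui : HasDerivAt (fun t => u t i) (u' i) x := hasDerivAt_pi.1 hu i
    have hvi : HasDerivAt (fun t => v t i) (v' i) x := hasDerivAt_pi.1 hv i
    by_cases h : (i : ℕ) < s
    · simpa [h] using (hui.fun_mul hvi).fun_neg
    · simpa [h] using hui.fun_mul hvi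
  have : (∑ i : Fin n, (if (i : ℕ) < s then -(u' i * v x i + u x i * v' i)
      else u' i * v x i + u x i * v' i)) = pform s n u' (v x) + pform s n (u x) v' := by
    unfold pform
    rw [← Finset.sum_add_distrib]
    refine Finset.sum_congr rfl fun i _ => ?_
    by_cases h : (i : ℕ) < s <;> simp [h] <;> ring
  rw [← this]
  exact key

lemma hasDerivAt_tanh (t : ℝ) : HasDerivAt Real.tanh ((Real.cosh t ^ 2)⁻¹) t := by
  have h := (Real.hasDerivAt_sinh t).fun_div (Real.hasDerivAt_cosh t) (Real.cosh_pos t).ne'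
  have heq : Real.tanh = fun x => Real.sinh x / Real.cosh x := by
    funext x; exact Real.tanh_eq_sinh_div_cosh x
  rw [heq]
  refine h.congr_deriv ?_
  have hc := (Real.cosh_pos t).ne'
  have hid := Real.cosh_sq_sub_sinh_sq t
  field_simp
  nlinarith [hid]


lemma combLL {s n : ℕ} {Z Z1 : Fin n → ℝ} {T c : ℝ}
    (q00 : pform s n Z Z = 0) (q01 : pform s n Z Z1 = 0) (q11 : pform s n Z1 Z1 = -2)
    (hc : c * c = 1 / 2) :
    pform s n (T • Z - c • Z1) (T • Z - c • Z1) = -1 := by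
  have q10 : pform s n Z1 Z = 0 := by rw [pform_comm]; exact q01
  simp only [pform_sub_left, pform_sub_right, pform_smul_left, pform_smul_right,
    q00, q01, q10, q11]
  nlinarith [hc]

lemma comb11 {s n : ℕ} {Z Z1 Z2 : Fin n → ℝ} {T A c : ℝ}
    (q00 : pform s n Z Z = 0) (q01 : pform s n Z Z1 = 0) (q11 : pform s n Z1 Z1 = -2)
    (q02 : pform s n Z Z2 = 2) (q12 : pform s n Z1 Z2 = 0) (q22 : pform s n Z2 Z2 = 4)
    (hc : c * c = 1 / 2) (hrel : T * T + 2 * (A * c) = 1) :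
    pform s n (T • Z1 + A • Z - c • Z2) (T • Z1 + A • Z - c • Z2) = 0 := by
  have q10 : pform s n Z1 Z = 0 := by rw [pform_comm]; exact q01
  have q20 : pform s n Z2 Z = 2 := by rw [pform_comm]; exact q02
  have q21 : pform s n Z2 Z1 = 0 := by rw [pform_comm]; exact q12
  simp only [pform_sub_left, pform_sub_right, pform_add_left, pform_add_right,
    pform_smul_left, pform_smul_right, q00, q01, q10, q11, q02, q20, q12, q21, q22]
  nlinarith [hc, hrel]

lemma comb22 {s n : ℕ} {Z : Fin n → ℝ} {A : ℝ} (q00 : pform s n Z Z = 0) :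
    pform s n (A • Z) (A • Z) = 0 := by
  simp only [pform_smul_left, pform_smul_right, q00]
  ring

lemma comb12 {s n : ℕ} {Z Z1 Z2 : Fin n → ℝ} {T A c B : ℝ}
    (q00 : pform s n Z Z = 0) (q01 : pform s n Z Z1 = 0) (q02 : pform s n Z Z2 = 2)
    (hval : 2 * (A * c) = B) :
    pform s n (T • Z1 + A • Z - c • Z2) (A • Z) = -B := by
  have q10 : pform s n Z1 Z = 0 := by rw [pform_comm]; exact q01
  have q20 : pform s n Z2 Z = 2 := by rw [pform_comm]; exact q02
  simp only [pform_sub_left, pform_add_left, pform_smul_left, pform_smul_right,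
    q00, q10, q20]
  nlinarith [hval]

lemma comb5 {n : ℕ} {Z Z1 : Fin n → ℝ} {D A S T c : ℝ}
    (hD : D = -(S * T)) (hA : A = S * c) :
    A • Z1 + D • Z = (-S) • (T • Z - c • Z1) := by
  rw [hD, hA]
  module

set_option maxHeartbeats 1000000 in
theorem stmt_11 (m s : ℕ) (hm : 2 ≤ m) (hs : s ≤ m) (I : Set ℝ)
    (hIo : IsOpen I) (hIc : I.OrdConnected)
    (z : ℝ → Fin (m + 1) → ℝ) (hz : ContDiffOn ℝ (⊤ : ℕ∞) z I)
    (h1 : ∀ x ∈ I, pform (s + 1) (m + 1) (z x) (z x) = 0)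
    (h2 : ∀ x ∈ I, pform (s + 1) (m + 1) (deriv z x) (deriv z x) = -2)
    (h3 : ∀ x ∈ I, pform (s + 1) (m + 1) (deriv (deriv z) x) (deriv (deriv z) x) = 4)
    (L : ℝ → ℝ → Fin (m + 1) → ℝ)
    (hLdef : ∀ x y : ℝ,
      L x y = Real.tanh ((x + y) / Real.sqrt 2) • z x - (Real.sqrt 2)⁻¹ • deriv z x) :
    ∀ x ∈ I, ∀ y : ℝ,
      pform (s + 1) (m + 1) (L x y) (L x y) = -1 ∧
      pform (s + 1) (m + 1) (pd1 L x y) (pd1 L x y) = 0 ∧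
      pform (s + 1) (m + 1) (pd2 L x y) (pd2 L x y) = 0 ∧
      pform (s + 1) (m + 1) (pd1 L x y) (pd2 L x y) = -(sech ((x + y) / Real.sqrt 2)) ^ 2 ∧
      pd1 (pd2 L) x y = (-(sech ((x + y) / Real.sqrt 2)) ^ 2) • L x y := by
  have hzI : ContDiffOn ℝ (⊤ : ℕ∞) z I := hz.of_le (by simp)
  have hsplit := (contDiffOn_infty_iff_deriv_of_isOpen hIo).1 hzI
  have hsplit1 := (contDiffOn_infty_iff_deriv_of_isOpen hIo).1 hsplit.2
  have hzD : ∀ x ∈ I, HasDerivAt z (deriv z x) x := fun x hx =>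
    (hsplit.1.differentiableAt (hIo.mem_nhds hx)).hasDerivAt
  have hz1D : ∀ x ∈ I, HasDerivAt (deriv z) (deriv (deriv z) x) x := fun x hx =>
    (hsplit1.1.differentiableAt (hIo.mem_nhds hx)).hasDerivAt
  have key : ∀ (f : ℝ → ℝ) (c : ℝ) (f' : ℝ) (x : ℝ), x ∈ I → (∀ t ∈ I, f t = c) →
      HasDerivAt f f' x → f' = 0 := by
    intro f c f' x hx hfc hf
    have hev : f =ᶠ[nhds x] fun _ => c :=
      Filter.eventually_of_mem (hIo.mem_nhds hx) hfc
    exact (hf.congr_of_eventuallyEq hev.symm).unique (hasDerivAt_const x c)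
  have p01 : ∀ x ∈ I, pform (s + 1) (m + 1) (z x) (deriv z x) = 0 := by
    intro x hx
    have hD := pform_hasDerivAt (s := s + 1) (hzD x hx) (hzD x hx)
    have h0 := key _ 0 _ x hx h1 hD
    have hc := pform_comm (s + 1) (m + 1) (deriv z x) (z x)
    linarith
  have p12 : ∀ x ∈ I, pform (s + 1) (m + 1) (deriv z x) (deriv (deriv z) x) = 0 := by
    intro x hx
    have hD := pform_hasDerivAt (s := s + 1) (hz1D x hx) (hz1D x hx)
    have h0 := key _ (-2) _ x hx h2 hD
    have hc := pform_comm (s + 1) (m + 1) (deriv (deriv z) x) (deriv z x)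
    linarith
  have p02 : ∀ x ∈ I, pform (s + 1) (m + 1) (z x) (deriv (deriv z) x) = 2 := by
    intro x hx
    have hD := pform_hasDerivAt (s := s + 1) (hzD x hx) (hz1D x hx)
    have h0 := key _ 0 _ x hx p01 hD
    have hc := pform_comm (s + 1) (m + 1) (deriv z x) (z x)
    have h11 := h2 x hx
    have h01 := p01 x hx
    linarith
  intro x hx y
  have hcc : (Real.sqrt 2)⁻¹ * (Real.sqrt 2)⁻¹ = 1 / 2 := by
    rw [← mul_inv, Real.mul_self_sqrt (by norm_num : (0:ℝ) ≤ 2)]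
    norm_num
  have hcoshpos := Real.cosh_pos ((x + y) / Real.sqrt 2)
  have hcoshne : Real.cosh ((x + y) / Real.sqrt 2) ≠ 0 := hcoshpos.ne'
  have hcsq := Real.cosh_sq_sub_sinh_sq ((x + y) / Real.sqrt 2)
  have hs2 : Real.sqrt 2 * Real.sqrt 2 = 2 := Real.mul_self_sqrt (by norm_num)
  -- first partial derivative
  have hinner : HasDerivAt (fun t : ℝ => (t + y) / Real.sqrt 2) ((Real.sqrt 2)⁻¹) x := by
    simpa [div_eq_mul_inv] using (((hasDerivAt_id x).add_const y).div_const (Real.sqrt 2))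
  have htanhx : HasDerivAt (fun t : ℝ => Real.tanh ((t + y) / Real.sqrt 2))
      ((Real.cosh ((x + y) / Real.sqrt 2) ^ 2)⁻¹ * (Real.sqrt 2)⁻¹) x := by
    have := (hasDerivAt_tanh ((x + y) / Real.sqrt 2)).comp x hinner
    simpa [Function.comp_def] using this
  have hL1 : HasDerivAt (fun t => L t y)
      (Real.tanh ((x + y) / Real.sqrt 2) • deriv z x
        + ((Real.cosh ((x + y) / Real.sqrt 2) ^ 2)⁻¹ * (Real.sqrt 2)⁻¹) • z x
        - (Real.sqrt 2)⁻¹ • deriv (deriv z) x) x := by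
    have heq : (fun t => L t y)
        = fun t => Real.tanh ((t + y) / Real.sqrt 2) • z t - (Real.sqrt 2)⁻¹ • deriv z t := by
      funext t; exact hLdef t y
    rw [heq]
    exact (htanhx.smul (hzD x hx)).sub ((hz1D x hx).const_smul ((Real.sqrt 2)⁻¹))
  have hpd1 : pd1 L x y
      = Real.tanh ((x + y) / Real.sqrt 2) • deriv z x
        + ((Real.cosh ((x + y) / Real.sqrt 2) ^ 2)⁻¹ * (Real.sqrt 2)⁻¹) • z x
        - (Real.sqrt 2)⁻¹ • deriv (deriv z) x := hL1.deriv
  -- second partial derivative (valid at every point, no smoothness needed)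
  have hpd2all : ∀ t : ℝ, pd2 L t y
      = ((Real.cosh ((t + y) / Real.sqrt 2) ^ 2)⁻¹ * (Real.sqrt 2)⁻¹) • z t := by
    intro t
    have hinner' : HasDerivAt (fun τ : ℝ => (t + τ) / Real.sqrt 2) ((Real.sqrt 2)⁻¹) y := by
      simpa [div_eq_mul_inv] using (((hasDerivAt_id y).const_add t).div_const (Real.sqrt 2))
    have htanh' : HasDerivAt (fun τ : ℝ => Real.tanh ((t + τ) / Real.sqrt 2))
        ((Real.cosh ((t + y) / Real.sqrt 2) ^ 2)⁻¹ * (Real.sqrt 2)⁻¹) y := by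
      have := (hasDerivAt_tanh ((t + y) / Real.sqrt 2)).comp y hinner'
      simpa [Function.comp_def] using this
    have heq : (fun τ => L t τ)
        = fun τ => Real.tanh ((t + τ) / Real.sqrt 2) • z t - (Real.sqrt 2)⁻¹ • deriv z t := by
      funext τ; exact hLdef t τ
    rw [pd2, heq]
    exact ((htanh'.smul_const (z t)).sub_const ((Real.sqrt 2)⁻¹ • deriv z t)).deriv
  have hpd2 : pd2 L x y
      = ((Real.cosh ((x + y) / Real.sqrt 2) ^ 2)⁻¹ * (Real.sqrt 2)⁻¹) • z x := hpd2all x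
  -- scalar identities
  have hrel : Real.tanh ((x + y) / Real.sqrt 2) * Real.tanh ((x + y) / Real.sqrt 2)
      + 2 * ((Real.cosh ((x + y) / Real.sqrt 2) ^ 2)⁻¹ * (Real.sqrt 2)⁻¹ * (Real.sqrt 2)⁻¹)
      = 1 := by
    rw [Real.tanh_eq_sinh_div_cosh]
    field_simp
    linear_combination (-(Real.sqrt 2 ^ 2)) * hcsq - hs2
  have hsechsq : 2 * ((Real.cosh ((x + y) / Real.sqrt 2) ^ 2)⁻¹ * (Real.sqrt 2)⁻¹
      * (Real.sqrt 2)⁻¹) = (sech ((x + y) / Real.sqrt 2)) ^ 2 := by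
    rw [sech, mul_assoc, hcc]
    field_simp
  have q00 := h1 x hx
  have q01 := p01 x hx
  have q11 := h2 x hx
  have q02 := p02 x hx
  have q12 := p12 x hx
  have q22 := h3 x hx
  refine ⟨?_, ?_, ?_, ?_, ?_⟩
  · rw [hLdef x y]
    exact combLL q00 q01 q11 hcc
  · rw [hpd1]
    exact comb11 q00 q01 q11 q02 q12 q22 hcc hrel
  · rw [hpd2]
    exact comb22 q00
  · rw [hpd1, hpd2]
    refine comb12 q00 q01 q02 ?_
    linear_combination hsechsq
  · -- second mixed derivative
    have heq : (fun t => pd2 L t y)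
        = fun t => ((Real.cosh ((t + y) / Real.sqrt 2) ^ 2)⁻¹ * (Real.sqrt 2)⁻¹) • z t := by
      funext t; exact hpd2all t
    have hcoshx : HasDerivAt (fun t : ℝ => Real.cosh ((t + y) / Real.sqrt 2))
        (Real.sinh ((x + y) / Real.sqrt 2) * (Real.sqrt 2)⁻¹) x := by
      have := (Real.hasDerivAt_cosh ((x + y) / Real.sqrt 2)).comp x hinner
      simpa [Function.comp_def] using this
    have hsq : HasDerivAt (fun t : ℝ => Real.cosh ((t + y) / Real.sqrt 2) ^ 2)
        (2 * Real.cosh ((x + y) / Real.sqrt 2)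
          * (Real.sinh ((x + y) / Real.sqrt 2) * (Real.sqrt 2)⁻¹)) x := by
      have := hcoshx.fun_pow 2
      norm_num at this
      convert this using 1
      try ring
    have hinv : HasDerivAt (fun t : ℝ => (Real.cosh ((t + y) / Real.sqrt 2) ^ 2)⁻¹)
        (-(2 * Real.cosh ((x + y) / Real.sqrt 2)
            * (Real.sinh ((x + y) / Real.sqrt 2) * (Real.sqrt 2)⁻¹))
          / (Real.cosh ((x + y) / Real.sqrt 2) ^ 2) ^ 2) x :=
      hsq.inv (pow_ne_zero 2 hcoshne)
    have hpsi := hinv.mul_const ((Real.sqrt 2)⁻¹)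
    have hfull : HasDerivAt (fun t => pd2 L t y)
        (((Real.cosh ((x + y) / Real.sqrt 2) ^ 2)⁻¹ * (Real.sqrt 2)⁻¹) • deriv z x
          + (-(2 * Real.cosh ((x + y) / Real.sqrt 2)
              * (Real.sinh ((x + y) / Real.sqrt 2) * (Real.sqrt 2)⁻¹))
            / (Real.cosh ((x + y) / Real.sqrt 2) ^ 2) ^ 2 * (Real.sqrt 2)⁻¹) • z x) x := by
      rw [heq]
      exact hpsi.smul (hzD x hx)
    have hval : pd1 (pd2 L) x y
        = ((Real.cosh ((x + y) / Real.sqrt 2) ^ 2)⁻¹ * (Real.sqrt 2)⁻¹) • deriv z x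
          + (-(2 * Real.cosh ((x + y) / Real.sqrt 2)
              * (Real.sinh ((x + y) / Real.sqrt 2) * (Real.sqrt 2)⁻¹))
            / (Real.cosh ((x + y) / Real.sqrt 2) ^ 2) ^ 2 * (Real.sqrt 2)⁻¹) • z x := hfull.deriv
    rw [hval, hLdef x y]
    refine comb5 ?_ ?_
    · rw [sech, Real.tanh_eq_sinh_div_cosh]
      field_simp
      linear_combination Real.sinh ((x + y) / Real.sqrt 2) * hs2
    · rw [sech]
      field_simp
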